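/- If a term t contains no n-cyclic subterm over a signature with k unary function symbols and one constant, then dep(t) ≤ n·k. -/

import Mathlib

/-- Terms over `k` unary function symbols and a single constant. -/
inductive UTerm (k : ℕ) : Type
  | const : UTerm k
  | fn : Fin k → UTerm k → UTerm k

namespace UTerm

def dep {k : ℕ} : UTerm k → ℕ
  | const => 0
  | fn _ t => 1 + dep t

inductive Subterm {k : ℕ} : UTerm k → UTerm k → Prop
  | refl (t : UTerm k) : Subterm t t
  | fn {t s : UTerm k} {f : Fin k} : Subterm t s → Subterm t (UTerm.fn f s)

def ProperSubterm {k : ℕ} (s t : UTerm k) : Prop :=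
  Subterm s t ∧ s ≠ t

def NCyclic {k : ℕ} (n : ℕ) (t : UTerm k) : Prop :=
  ∃ (f : Fin k) (s : ℕ → UTerm k),
    Subterm (UTerm.fn f (s (n + 1))) t ∧
    ∀ i, 1 ≤ i → i ≤ n → ProperSubterm (UTerm.fn f (s i)) (UTerm.fn f (s (i + 1)))

end UTerm

/-!
A term over unary symbols is a single branch, so `dep t` is the total number of occurrences of
function symbols in `t`. If `dep t > n * k`, some symbol `f` occurs at least `n + 1` times by
pigeonhole, and these occurrences, read from the bottom up, are nested as proper subterms: they form
an `n`-cyclic chain inside `t` itself.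
-/

namespace UTerm

variable {k : ℕ}

def count (f : Fin k) : UTerm k → ℕ
  | const => 0
  | fn g u => (if g = f then 1 else 0) + count f u

theorem dep_eq_sum_count (t : UTerm k) : dep t = ∑ f, count f t := by
  induction t with
  | const => simp [dep, count]
  | fn g u ih => simp [dep, count, Finset.sum_add_distrib, ih]

theorem Subterm.dep_le {s t : UTerm k} (h : Subterm s t) : dep s ≤ dep t := by
  induction h with
  | refl => exact le_rfl
  | fn _ ih => simp only [dep]; omega

theorem Subterm.properSubterm_fn {s t : UTerm k} (h : Subterm s t) (g : Fin k) :
    ProperSubterm s (UTerm.fn g t) := by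
  refine ⟨h.fn, fun heq => ?_⟩
  have := h.dep_le
  simp only [heq, dep] at this
  omega

theorem exists_chain_of_lt_count {f : Fin k} :
    ∀ {n : ℕ} {t : UTerm k}, n < count f t → ∃ s : ℕ → UTerm k,
      Subterm (fn f (s (n + 1))) t ∧
      ∀ i, 1 ≤ i → i ≤ n → ProperSubterm (fn f (s i)) (fn f (s (i + 1)))
  | _, const, h => by simp [count] at h
  | n, fn g u, h => by
    by_cases hg : g = f
    · subst hg
      cases n with
      | zero => exact ⟨fun _ => u, Subterm.refl _, by omega⟩
      | succ m =>
        have hu : m < count g u := by simp only [count, ↓reduceIte] at h; omega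
        obtain ⟨s, hsub, hchain⟩ := exists_chain_of_lt_count hu
        -- the root occurrence of `g` becomes the new top of the chain
        refine ⟨Function.update s (m + 2) u, by simpa using Subterm.refl _, fun i hi1 hi2 => ?_⟩
        rcases Nat.lt_or_eq_of_le hi2 with hlt | rfl
        · rw [Function.update_of_ne (by omega), Function.update_of_ne (by omega)]
          exact hchain i hi1 (by omega)
        · rw [Function.update_of_ne (by omega), Function.update_self]
          exact hsub.properSubterm_fn g
    · simp only [count, if_neg hg, zero_add] at h
      obtain ⟨s, hsub, hchain⟩ := exists_chain_of_lt_count h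
      exact ⟨s, hsub.fn, hchain⟩

theorem ncyclic_of_lt_count {f : Fin k} {n : ℕ} {t : UTerm k} (h : n < count f t) : NCyclic n t :=
  ⟨f, exists_chain_of_lt_count h⟩

end UTerm

theorem dep_le_of_no_ncyclic_subterm_general {k n : ℕ} (t : UTerm k)
    (h : ∀ s : UTerm k, UTerm.Subterm s t → ¬ UTerm.NCyclic n s) :
    UTerm.dep t ≤ n * k := by
  by_contra! hlt
  have hsum : ∑ _f : Fin k, n < ∑ f, UTerm.count f t := by
    simpa [← UTerm.dep_eq_sum_count, mul_comm] using hlt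
  obtain ⟨f, -, hf⟩ := Finset.exists_lt_of_sum_lt hsum
  exact h t (.refl t) (UTerm.ncyclic_of_lt_count hf)

theorem dep_le_of_no_ncyclic_subterm {k n : ℕ} (hn : 1 ≤ n) (t : UTerm k)
    (h : ∀ s : UTerm k, UTerm.Subterm s t → ¬ UTerm.NCyclic n s) :
    UTerm.dep t ≤ n * k :=
  dep_le_of_no_ncyclic_subterm_general t h
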